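/- Let f(x) = (x−1)^6 and g(x) = (x²+1)(x²−x+1)², let A, B ∈ GL₆(ℤ) be their companion matrices, and let v = (A⁻¹B − I)(e₆). Then v = (−4, 11, −16, 11, −4, 0), and the matrix γ = B·A⁻¹·B⁶·A satisfies: the coefficient of e₆ in γ(v) lies in {1, −1, 2, −2}, and the three vectors v, γ(v), γ⁻¹(v) are linearly independent over ℚ. -/

import Mathlib

open Matrix Polynomial

/-- The companion matrix of a monic polynomial `p` of degree `n`: it sends
`e_i ↦ e_{i+1}` for `1 ≤ i ≤ n-1` (zero-indexed: column `j` is `e_{j+1}` when `j+1 < n`),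
and `e_n ↦ -(c_0 e_1 + c_1 e_2 + ⋯ + c_{n-1} e_n)`. -/
def companionMat (n : ℕ) (p : Polynomial ℤ) : Matrix (Fin n) (Fin n) ℤ :=
  Matrix.of fun i j =>
    if (j : ℕ) + 1 < n then (if (i : ℕ) = (j : ℕ) + 1 then 1 else 0) else -p.coeff (i : ℕ)

/-!
Everything reduces to finite integer computations once `A` and `B` are written out from the
coefficients of `(X - 1)^6 = X^6 - 6X^5 + 15X^4 - 20X^3 + 15X^2 - 6X + 1` and
`g = X^6 - 2X^5 + 4X^4 - 4X^3 + 4X^2 - 2X + 1`. The inverse `A⁻¹` is checked through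
`A * A⁻¹ = 1` and `γ⁻¹ v` through `γ (γ⁻¹ v) = v`, so no inverse has to be computed.
The three vectors are independent because their `3 × 3` minor on the coordinates `1, 2, 6`
equals `546`.
-/

theorem companionMat_six (p : ℤ[X]) :
    companionMat 6 p =
      !![0, 0, 0, 0, 0, -p.coeff 0; 1, 0, 0, 0, 0, -p.coeff 1; 0, 1, 0, 0, 0, -p.coeff 2;
         0, 0, 1, 0, 0, -p.coeff 3; 0, 0, 0, 1, 0, -p.coeff 4; 0, 0, 0, 0, 1, -p.coeff 5] := by
  ext i j
  fin_cases i <;> fin_cases j <;> rfl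

theorem companionMat_X_sub_one_pow_six :
    companionMat 6 ((X - 1) ^ 6) =
      !![0, 0, 0, 0, 0, -1; 1, 0, 0, 0, 0, 6; 0, 1, 0, 0, 0, -15;
         0, 0, 1, 0, 0, 20; 0, 0, 0, 1, 0, -15; 0, 0, 0, 0, 1, 6] := by
  have hX : (X - 1 : ℤ[X]) = X + C (-1) := by simp [sub_eq_add_neg]
  rw [companionMat_six, hX]
  simp only [coeff_X_add_C_pow]
  norm_num [Nat.choose]

theorem companionMat_X_sq_add_one_mul_X_sq_sub_X_add_one_sq :
    companionMat 6 ((X ^ 2 + 1) * (X ^ 2 - X + 1) ^ 2) =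
      !![0, 0, 0, 0, 0, -1; 1, 0, 0, 0, 0, 2; 0, 1, 0, 0, 0, -4;
         0, 0, 1, 0, 0, 4; 0, 0, 0, 1, 0, -4; 0, 0, 0, 0, 1, 2] := by
  have hg : ((X ^ 2 + 1) * (X ^ 2 - X + 1) ^ 2 : ℤ[X]) =
      X ^ 6 - 2 * X ^ 5 + 4 * X ^ 4 - 4 * X ^ 3 + 4 * X ^ 2 - 2 * X + 1 := by ring
  rw [companionMat_six, hg]
  simp [coeff_X, coeff_one, coeff_X_pow]

namespace Matrix

theorem linearIndependent_rows_of_det_submatrix_ne_zero {m n R : Type*} [Fintype m]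
    [DecidableEq m] [CommRing R] [IsDomain R] (M : Matrix m n R) (e : m → n)
    (h : (M.submatrix id e).det ≠ 0) : LinearIndependent R (fun i ↦ M i) :=
  (linearIndependent_rows_of_det_ne_zero h).of_comp (LinearMap.funLeft R R e)

theorem linearIndependent_intCast_rows_of_det_submatrix_ne_zero {m n : Type*} [Fintype m]
    [DecidableEq m] (M : Matrix m n ℤ) (e : m → n) (h : (M.submatrix id e).det ≠ 0) :
    LinearIndependent ℚ (fun i j ↦ (M i j : ℚ)) := by
  refine linearIndependent_rows_of_det_submatrix_ne_zero (M.map (Int.cast : ℤ → ℚ)) e ?_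
  change ((M.submatrix id e).map (Int.castRingHom ℚ)).det ≠ 0
  rw [← RingHom.mapMatrix_apply, ← RingHom.map_det, eq_intCast]
  exact Int.cast_ne_zero.mpr h

theorem GeneralLinearGroup.inv_mulVec_eq_of_mulVec_eq {n R : Type*} [Fintype n] [DecidableEq n]
    [CommRing R] (u : GL n R) {v w : n → R} (h : (u : Matrix n n R) *ᵥ w = v) :
    (↑u⁻¹ : Matrix n n R) *ᵥ v = w := by
  rw [← h, mulVec_mulVec, ← Units.val_mul, inv_mul_cancel, Units.val_one, one_mulVec]

end Matrix

/-- for γ = BA⁻¹B⁶A the coefficient of e₆ in γ(v) lies in {1, -1, 2, -2} and v, γ(v), γ⁻¹(v) are linearly independent over ℚ. -/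
theorem entry28_certificate (f g : Polynomial ℤ)
    (hf : f = (Polynomial.X - 1) ^ 6)
    (hg : g = (Polynomial.X ^ 2 + 1) * (Polynomial.X ^ 2 - Polynomial.X + 1) ^ 2)
    (A B : GL (Fin 6) ℤ)
    (hA : (A : Matrix (Fin 6) (Fin 6) ℤ) = companionMat 6 f)
    (hB : (B : Matrix (Fin 6) (Fin 6) ℤ) = companionMat 6 g)
    (v : Fin 6 → ℤ)
    (hv : v = ((A⁻¹ * B : GL (Fin 6) ℤ) : Matrix (Fin 6) (Fin 6) ℤ) *ᵥ
      Pi.single (5 : Fin 6) 1 - Pi.single (5 : Fin 6) 1)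
    (γ : GL (Fin 6) ℤ) (hγ : γ = B * A⁻¹ * B ^ 6 * A) :
    v = ![-4, 11, -16, 11, -4, 0] ∧
    ((γ : Matrix (Fin 6) (Fin 6) ℤ) *ᵥ v) 5 ∈ ({1, -1, 2, -2} : Set ℤ) ∧
    LinearIndependent ℚ
      ![(fun i => (v i : ℚ)),
        (fun i => (((γ : Matrix (Fin 6) (Fin 6) ℤ) *ᵥ v) i : ℚ)),
        (fun i => (((↑γ⁻¹ : Matrix (Fin 6) (Fin 6) ℤ) *ᵥ v) i : ℚ))] := by
  rw [hf, companionMat_X_sub_one_pow_six] at hA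
  rw [hg, companionMat_X_sq_add_one_mul_X_sq_sub_X_add_one_sq] at hB
  have hA_inv : (↑A⁻¹ : Matrix (Fin 6) (Fin 6) ℤ) =
      !![6, 1, 0, 0, 0, 0; -15, 0, 1, 0, 0, 0; 20, 0, 0, 1, 0, 0;
         -15, 0, 0, 0, 1, 0; 6, 0, 0, 0, 0, 1; -1, 0, 0, 0, 0, 0] :=
    Units.inv_eq_of_mul_eq_one_right (by rw [hA]; decide)
  have hv' : v = ![-4, 11, -16, 11, -4, 0] := by
    rw [hv, Units.val_mul, hA_inv, hB]; decide
  have hγ_val : (γ : Matrix (Fin 6) (Fin 6) ℤ) = B.val * A⁻¹.val * B.val ^ 6 * A.val := by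
    rw [hγ, Units.val_mul, Units.val_mul, Units.val_mul, Units.val_pow_eq_pow_val]
  have hγv : (γ : Matrix (Fin 6) (Fin 6) ℤ) *ᵥ v = ![-4, 2, 13, -24, 17, -2] := by
    rw [hγ_val, hA_inv, hA, hB, hv']; decide
  have hγ_inv_v : (↑γ⁻¹ : Matrix (Fin 6) (Fin 6) ℤ) *ᵥ v = ![-63, 114, -167, 108, -56, 2] :=
    GeneralLinearGroup.inv_mulVec_eq_of_mulVec_eq γ (by rw [hγ_val, hA_inv, hA, hB, hv']; decide)
  refine ⟨hv', by rw [hγv]; simp, ?_⟩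
  rw [hγv, hγ_inv_v, hv']
  convert linearIndependent_intCast_rows_of_det_submatrix_ne_zero
    !![-4, 11, -16, 11, -4, 0; -4, 2, 13, -24, 17, -2; -63, 114, -167, 108, -56, 2]
    ![0, 1, 5] (by decide) using 1
  ext k j
  fin_cases k <;> rfl
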